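/- Let T₁ = {0, u₁, u₂} with u₁, u₂ linearly independent and T₂ = {0, v₁, v₂} with v₁, v₂ nonzero, distinct and linearly dependent. Then the difference of Jacobi polynomials satisfies J_{C,T₁}(w,z,x,y) − J_{C,T₂}(w,z,x,y) = −q^{m-2}(q−1) · x^{q^{m-1}−3} · y^{(q−1)q^{m-1}−3} · (wy − xz)³, where C = RM_q(1,m). -/

import Mathlib

open Finset

private def D {F : Type} [Field F] {m : ℕ} (a b : Fin m → F) : F := ∑ i, a i * b i

private lemma D_comm {F : Type} [Field F] {m : ℕ} (a b : Fin m → F) : D a b = D b a :=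
  Finset.sum_congr rfl (fun i _ => mul_comm _ _)

private lemma D_zero_right {F : Type} [Field F] {m : ℕ} (a : Fin m → F) : D a 0 = 0 := by
  simp [D]

private lemma D_single {F : Type} [Field F] {m : ℕ} (v : Fin m → F) (j : Fin m) :
    D v (Pi.single j 1) = v j := by
  unfold D
  rw [Finset.sum_eq_single j]
  · simp
  · intro i _ hij; simp [Pi.single_apply, hij]
  · simp

private def Dhom {F : Type} [Field F] {m : ℕ} (u : Fin m → F) : (Fin m → F) →+ F where
  toFun w := D w u
  map_zero' := by simp [D]
  map_add' := by intro a b; simp [D, add_mul, Finset.sum_add_distrib]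

private lemma Dhom_apply {F : Type} [Field F] {m : ℕ} (u w : Fin m → F) :
    Dhom u w = D w u := rfl

private lemma Dhom_surj {F : Type} [Field F] {m : ℕ} {u : Fin m → F} (hu : u ≠ 0) :
    Function.Surjective (Dhom u) := by
  obtain ⟨j, hj⟩ : ∃ j, u j ≠ 0 := by
    by_contra h; push_neg at h; exact hu (funext h)
  intro a
  refine ⟨Pi.single j (a * (u j)⁻¹), ?_⟩
  show D _ u = a
  unfold D
  rw [Finset.sum_eq_single j]
  · simp [mul_assoc, inv_mul_cancel₀ hj]
  · intro i _ hij; simp [Pi.single_apply, hij]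
  · simp

private lemma pi_eq_sum_single {F : Type} [Field F] {m : ℕ} (u : Fin m → F) :
    u = ∑ i, u i • (Pi.single i (1:F) : Fin m → F) := by
  funext j
  simp [Finset.sum_apply, Pi.single_apply]

private lemma D_linear {F : Type} [Field F] {m : ℕ} (l : (Fin m → F) →ₗ[F] F) (u : Fin m → F) :
    D (fun i => l (Pi.single i 1)) u = l u := by
  unfold D
  conv_rhs => rw [pi_eq_sum_single u, map_sum]
  exact Finset.sum_congr rfl (fun i _ => by rw [map_smul, smul_eq_mul, mul_comm])

private noncomputable def LD {F : Type} [Field F] {m : ℕ} (v : Fin m → F) :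
    (Fin m → F) →ₗ[F] F := ∑ i, v i • LinearMap.proj i

private lemma LD_apply {F : Type} [Field F] {m : ℕ} (v u : Fin m → F) :
    LD v u = D v u := by
  simp [LD, D, LinearMap.sum_apply]
private lemma fiberCard {α β : Type*} [Fintype α] [Fintype β] [DecidableEq β]
    [AddCommGroup α] [AddCommGroup β] (f : α →+ β) (hf : Function.Surjective f) (c : β) :
    (Finset.univ.filter fun a => f a = c).card * Fintype.card β = Fintype.card α := by
  have key : ∀ c : β, (Finset.univ.filter fun a => f a = c).card
      = (Finset.univ.filter fun a => f a = (0:β)).card := by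
    intro c
    obtain ⟨a₀, ha₀⟩ := hf c
    apply Finset.card_bij (fun a _ => a - a₀)
    · intro a ha; simp only [mem_filter, mem_univ, true_and] at ha ⊢
      simp [ha, ha₀]
    · intro a ha a' ha' h; exact sub_left_injective h
    · intro bb hb
      refine ⟨bb + a₀, ?_, by simp⟩
      simp only [mem_filter, mem_univ, true_and] at hb ⊢
      simp [hb, ha₀]
  have tot : ∑ c : β, (Finset.univ.filter fun a => f a = c).card = Fintype.card α := by
    rw [← Finset.card_univ, Finset.card_eq_sum_card_fiberwise (fun a _ => Finset.mem_univ (f a))]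
  rw [key c]
  have : ∑ c : β, (Finset.univ.filter fun a => f a = c).card
      = Fintype.card β * (Finset.univ.filter fun a => f a = (0:β)).card := by
    rw [Finset.sum_congr rfl (fun c _ => key c), Finset.sum_const, smul_eq_mul, Finset.card_univ]
  rw [mul_comm, ← this, tot]

private lemma tripleCount {V : Type*} [DecidableEq V] (p₀ p₁ p₂ : V)
    (h01 : p₀ ≠ p₁) (h02 : p₀ ≠ p₂) (h12 : p₁ ≠ p₂) (P : V → Prop) [DecidablePred P] :
    {u ∈ ({p₀, p₁, p₂} : Set V) | P u}.ncard
      = (if P p₀ then 1 else 0) + (if P p₁ then 1 else 0) + (if P p₂ then 1 else 0) := by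
  have hset : {u ∈ ({p₀, p₁, p₂} : Set V) | P u}
      = ↑(({p₀, p₁, p₂} : Finset V).filter P) := by
    ext u; simp [and_comm]
  rw [hset, Set.ncard_coe_finset]
  rw [show ({p₀, p₁, p₂} : Finset V) = insert p₀ (insert p₁ {p₂}) from rfl,
    Finset.filter_insert, Finset.filter_insert, Finset.filter_singleton]
  split_ifs <;> simp_all [Finset.card_insert_of_notMem]

private lemma compCount {V : Type*} [Fintype V] (T : Set V) (P : V → Prop) :
    {u ∈ Tᶜ | P u}.ncard = {u | P u}.ncard - {u ∈ T | P u}.ncard := by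
  classical
  have hu : {u | P u} = {u ∈ T | P u} ∪ {u ∈ Tᶜ | P u} := by
    ext u; by_cases h : u ∈ T <;> simp [h]
  have hd : Disjoint {u ∈ T | P u} {u ∈ Tᶜ | P u} := by
    rw [Set.disjoint_left]; rintro u ⟨h1,_⟩ ⟨h2,_⟩; exact h2 h1
  rw [hu, Set.ncard_union_eq hd (Set.toFinite _) (Set.toFinite _)]
  omega
private lemma exists_dual {F : Type} [Field F] {m : ℕ} (u₁ u₂ : Fin m → F)
    (h : LinearIndependent F ![u₁, u₂]) (a₁ a₂ : F) :
    ∃ l : (Fin m → F) →ₗ[F] F, l u₁ = a₁ ∧ l u₂ = a₂ := by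
  classical
  have hne : u₁ ≠ u₂ := by
    intro he
    have h01 : (0 : Fin 2) = 1 := h.injective (by simp [he])
    simp at h01
  have hr : Set.range ![u₁, u₂] = {u₁, u₂} := by
    ext v; simp [Fin.exists_fin_two, or_comm]
  have hs : LinearIndepOn F id ({u₁, u₂} : Set (Fin m → F)) := by
    rw [← hr]; exact h.linearIndepOn_id
  have hsub := hs.subset_extend (Set.subset_univ _)
  let B := Module.Basis.extend hs
  have hu₁ : u₁ ∈ hs.extend (Set.subset_univ _) := hsub (by simp)
  have hu₂ : u₂ ∈ hs.extend (Set.subset_univ _) := hsub (by simp)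
  refine ⟨B.constr F (fun i => if (i : Fin m → F) = u₁ then a₁ else a₂), ?_, ?_⟩
  · have h2 : (B.constr F (fun i => if (i : Fin m → F) = u₁ then a₁ else a₂)) (B ⟨u₁, hu₁⟩)
        = a₁ := by rw [Module.Basis.constr_basis]; simp
    rwa [Module.Basis.extend_apply_self] at h2
  · have h2 : (B.constr F (fun i => if (i : Fin m → F) = u₁ then a₁ else a₂)) (B ⟨u₂, hu₂⟩)
        = a₂ := by rw [Module.Basis.constr_basis]; simp [hne.symm]
    rwa [Module.Basis.extend_apply_self] at h2

private lemma Dhom_pair_surj {F : Type} [Field F] {m : ℕ} {u₁ u₂ : Fin m → F}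
    (h : LinearIndependent F ![u₁, u₂]) :
    Function.Surjective ((Dhom u₁).prod (Dhom u₂)) := by
  rintro ⟨a₁, a₂⟩
  obtain ⟨l, h1, h2⟩ := exists_dual u₁ u₂ h a₁ a₂
  refine ⟨fun i => l (Pi.single i 1), ?_⟩
  simp [AddMonoidHom.prod_apply, Dhom_apply, D_linear, h1, h2]

private noncomputable def tm {F : Type} [Field F] {m : ℕ} (w z x y : ℤ) (T : Set (Fin m → F))
    (c : (Fin m → F) → F) : ℤ :=
  w ^ {u ∈ T | c u = 0}.ncard * z ^ {u ∈ T | c u ≠ 0}.ncard *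
    x ^ {u ∈ Tᶜ | c u = 0}.ncard * y ^ {u ∈ Tᶜ | c u ≠ 0}.ncard

set_option maxHeartbeats 1000000 in
/-- Difference of Jacobi polynomials of `RM_q(1,m)` for a rank-2 reference set
`T₁ = {0, u₁, u₂}` and a rank-1 reference set `T₂ = {0, v₁, v₂}`. -/
theorem stmt_18 (F : Type) [Field F] [Fintype F] (q m : ℕ) (hq : q = Fintype.card F)
    (hq3 : 3 ≤ q) (hm : 2 ≤ m)
    (C : Set ((Fin m → F) → F))
    (hC : C = {c | ∃ (l : (Fin m → F) →ₗ[F] F) (b : F), c = fun x => l x + b})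
    (J : Set (Fin m → F) → ℤ → ℤ → ℤ → ℤ → ℤ)
    (hJ : ∀ (T : Set (Fin m → F)) (w z x y : ℤ), J T w z x y =
      ∑ c ∈ C.toFinite.toFinset,
        w ^ {u ∈ T | c u = 0}.ncard * z ^ {u ∈ T | c u ≠ 0}.ncard *
        x ^ {u ∈ Tᶜ | c u = 0}.ncard * y ^ {u ∈ Tᶜ | c u ≠ 0}.ncard)
    (u₁ u₂ : Fin m → F) (h₁ : LinearIndependent F ![u₁, u₂])
    (v₁ v₂ : Fin m → F) (hv₁ : v₁ ≠ 0) (hv₂ : v₂ ≠ 0) (hv : v₁ ≠ v₂)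
    (t : F) (ht : v₂ = t • v₁) :
    ∀ w z x y : ℤ,
      J {0, u₁, u₂} w z x y - J {0, v₁, v₂} w z x y =
        -((q ^ (m - 2) * (q - 1) : ℕ) : ℤ) * x ^ (q ^ (m - 1) - 3) *
          y ^ ((q - 1) * q ^ (m - 1) - 3) * (w * y - x * z) ^ 3 := by
  classical
  intro w z x y
  subst ht
  have hqF : Fintype.card F = q := hq.symm
  have hq1 : 1 ≤ q := by omega
  have hcardV : Fintype.card (Fin m → F) = q ^ m := by
    rw [Fintype.card_fun, hqF, Fintype.card_fin]
  -- distinctness facts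
  have hu0 : u₁ ≠ 0 := h₁.ne_zero 0
  have hu0' : u₂ ≠ 0 := h₁.ne_zero 1
  have hu12 : u₁ ≠ u₂ := by
    intro he
    have h01 : (0 : Fin 2) = 1 := h₁.injective (by simp [he])
    simp at h01
  have ht0 : t ≠ 0 := by rintro rfl; simp at hv₂
  have ht1 : t ≠ 1 := by rintro rfl; simp at hv
  have hv12 : v₁ ≠ t • v₁ := hv
  -- the parametrization
  set e : (Fin m → F) × F → ((Fin m → F) → F) := fun p u => D p.1 u + p.2 with he
  have einj : Function.Injective e := by
    rintro ⟨v, b⟩ ⟨v', b'⟩ h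
    have hb : b = b' := by
      have h0 := congrFun h 0
      simpa [he, D_zero_right] using h0
    have hvv : v = v' := by
      funext j
      have hj := congrFun h (Pi.single j 1)
      simp only [he, D_single] at hj
      rw [hb] at hj
      exact add_right_cancel hj
    simp [hvv, hb]
  have hCfin : C.toFinite.toFinset = Finset.image e Finset.univ := by
    ext c
    simp only [Set.Finite.mem_toFinset, hC, Set.mem_setOf_eq, Finset.mem_image,
      Finset.mem_univ, true_and]
    constructor
    · rintro ⟨l, b, rfl⟩
      exact ⟨(fun i => l (Pi.single i 1), b), by funext u; simp [he, D_linear]⟩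
    · rintro ⟨⟨v, b⟩, rfl⟩
      exact ⟨LD v, b, by funext u; simp [he, LD_apply]⟩
  -- numeric abbreviations
  set A := q ^ (m - 1) with hA
  set Bn := (q - 1) * q ^ (m - 1) with hBn
  have hA3 : 3 ≤ A := le_trans hq3 (Nat.le_self_pow (by omega) q)
  have hqm : q ^ m = A * q := by rw [hA, ← pow_succ]; congr 1; omega
  have hBn' : Bn = (q - 1) * A := by rw [hBn, hA]
  have hNA : A + Bn = q ^ m := by
    have h' : 1 + (q - 1) = q := by omega
    calc A + Bn = (1 + (q-1)) * A := by rw [hBn']; ring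
    _ = q * A := by rw [h']
    _ = A * q := by ring
    _ = q ^ m := hqm.symm
  have hB3 : 3 ≤ Bn := by
    have : 2 * 3 ≤ (q - 1) * A := Nat.mul_le_mul (by omega) hA3
    omega
  set g : ℕ → ℤ := fun k => w ^ k * z ^ (3 - k) * x ^ (A - k) * y ^ (Bn - (3 - k)) with hg
  set Q : ℤ := (q : ℤ) with hQ
  set qm2 : ℤ := (q : ℤ) ^ (m - 2) with hqm2
  -- zero-count
  have hZ : ∀ (v : Fin m → F), v ≠ 0 → ∀ b : F,
      (Finset.univ.filter fun u => e (v, b) u = 0).card = A := by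
    intro v hv0 b
    have hfilter : (Finset.univ.filter fun u => e (v, b) u = 0)
        = Finset.univ.filter fun u => Dhom v u = -b := by
      apply Finset.filter_congr
      intro u _
      simp only [he, Dhom_apply]
      rw [D_comm v u]
      exact add_eq_zero_iff_eq_neg
    have hfc := fiberCard (Dhom v) (Dhom_surj hv0) (-b)
    rw [hcardV, hqF] at hfc
    rw [hfilter]
    exact Nat.eq_of_mul_eq_mul_right (by omega) (hfc.trans hqm)
  -- term formula for v ≠ 0
  have hterm : ∀ (p₁ p₂ : Fin m → F), (0:Fin m → F) ≠ p₁ → (0:Fin m → F) ≠ p₂ → p₁ ≠ p₂ →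
      ∀ (v : Fin m → F) (b : F), v ≠ 0 →
      tm w z x y ({0, p₁, p₂} : Set (Fin m → F)) (e (v, b)) =
        g ((if b = 0 then 1 else 0) + (if Dhom p₁ v = -b then 1 else 0) +
           (if Dhom p₂ v = -b then 1 else 0)) := by
    intro p₁ p₂ h01 h02 h12 v b hv0
    have hc0 : e (v, b) 0 = b := by simp [he, D_zero_right]
    have hcp1 : (e (v, b) p₁ = 0) ↔ (Dhom p₁ v = -b) := by
      simp only [he, Dhom_apply]
      rw [D_comm v p₁]
      exact add_eq_zero_iff_eq_neg
    have hcp2 : (e (v, b) p₂ = 0) ↔ (Dhom p₂ v = -b) := by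
      simp only [he, Dhom_apply]
      rw [D_comm v p₂]
      exact add_eq_zero_iff_eq_neg
    have hZ' : {u : Fin m → F | e (v, b) u = 0}.ncard = A := by
      have hs : {u : Fin m → F | e (v, b) u = 0}
          = ↑(Finset.univ.filter fun u => e (v, b) u = 0) := by
        ext u; simp
      rw [hs, Set.ncard_coe_finset, hZ v hv0 b]
    have hZ'' : {u : Fin m → F | e (v, b) u ≠ 0}.ncard = Bn := by
      have hs : {u : Fin m → F | e (v, b) u ≠ 0}
          = ↑(Finset.univ.filter fun u => ¬ (e (v, b) u = 0)) := by
        ext u; simp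
      rw [hs, Set.ncard_coe_finset]
      have hcards := Finset.card_filter_add_card_filter_not
        (s := (Finset.univ : Finset (Fin m → F))) (p := fun u => e (v, b) u = 0)
      rw [Finset.card_univ, hcardV, hZ v hv0 b] at hcards
      omega
    simp only [tm]
    rw [tripleCount 0 p₁ p₂ h01 h02 h12 (fun u => e (v, b) u = 0),
        tripleCount 0 p₁ p₂ h01 h02 h12 (fun u => e (v, b) u ≠ 0),
        compCount, compCount,
        tripleCount 0 p₁ p₂ h01 h02 h12 (fun u => e (v, b) u = 0),
        tripleCount 0 p₁ p₂ h01 h02 h12 (fun u => e (v, b) u ≠ 0)]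
    simp only [hc0, hcp1, hcp2, hZ', hZ'', hg, ne_eq, ite_not]
    split_ifs <;> norm_num
  -- term formula for v = 0
  have hterm0 : ∀ (p₁ p₂ : Fin m → F), (0:Fin m → F) ≠ p₁ → (0:Fin m → F) ≠ p₂ → p₁ ≠ p₂ →
      ∀ b : F,
      tm w z x y ({0, p₁, p₂} : Set (Fin m → F)) (e (0, b)) =
        (if b = 0 then w ^ 3 * x ^ (q ^ m - 3) else z ^ 3 * y ^ (q ^ m - 3)) := by
    intro p₁ p₂ h01 h02 h12 b
    have hcu : ∀ u, e ((0 : Fin m → F), b) u = b := by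
      intro u; simp [he, D]
    simp only [tm]
    rw [tripleCount 0 p₁ p₂ h01 h02 h12 (fun u => e (0, b) u = 0),
        tripleCount 0 p₁ p₂ h01 h02 h12 (fun u => e (0, b) u ≠ 0),
        compCount, compCount,
        tripleCount 0 p₁ p₂ h01 h02 h12 (fun u => e (0, b) u = 0),
        tripleCount 0 p₁ p₂ h01 h02 h12 (fun u => e (0, b) u ≠ 0)]
    simp only [hcu, ne_eq, ite_not]
    have hncu : (Set.univ : Set (Fin m → F)).ncard = q ^ m := by
      rw [Set.ncard_univ, Nat.card_eq_fintype_card, hcardV]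
    by_cases hb : b = 0
    · simp [hb, Set.setOf_true, Set.setOf_false, Set.ncard_univ, Nat.card_eq_fintype_card, hcardV]
      all_goals norm_num
    · simp [hb, Set.setOf_true, Set.setOf_false, Set.ncard_univ, Nat.card_eq_fintype_card, hcardV]
      all_goals norm_num
  -- summing an indicator over F
  have sumF : ∀ (c : F) (X Y : ℤ), (∑ a : F, if a = c then X else Y) = X + ((q:ℤ) - 1) * Y := by
    intro c X Y
    rw [← Finset.sum_erase_add _ _ (Finset.mem_univ c), if_pos rfl,
        Finset.sum_congr rfl (fun a ha => if_neg (Finset.ne_of_mem_erase ha)),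
        Finset.sum_const, Finset.card_erase_of_mem (Finset.mem_univ c), Finset.card_univ, hqF,
        nsmul_eq_mul]
    have hc : ((q - 1 : ℕ) : ℤ) = (q : ℤ) - 1 := by
      push_cast [Nat.cast_sub hq1]; ring
    rw [hc]; ring
  have sumF2 : ∀ (c c' : F), c ≠ c' → ∀ (X X' Y : ℤ),
      (∑ a : F, if a = c then X else if a = c' then X' else Y) = X + X' + ((q:ℤ) - 2) * Y := by
    intro c c' hcc X X' Y
    have hc' : c' ∈ Finset.univ.erase c := Finset.mem_erase.mpr ⟨hcc.symm, Finset.mem_univ c'⟩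
    rw [← Finset.sum_erase_add _ _ (Finset.mem_univ c), if_pos rfl,
        ← Finset.sum_erase_add _ _ hc']
    rw [if_neg hcc.symm, if_pos rfl]
    have hval : ∀ a ∈ (Finset.univ.erase c).erase c',
        (if a = c then X else if a = c' then X' else Y) = Y := by
      intro a ha
      rw [if_neg (Finset.ne_of_mem_erase (Finset.mem_of_mem_erase ha)),
          if_neg (Finset.ne_of_mem_erase ha)]
    rw [Finset.sum_congr rfl hval, Finset.sum_const, Finset.card_erase_of_mem hc',
        Finset.card_erase_of_mem (Finset.mem_univ c), Finset.card_univ, hqF, nsmul_eq_mul]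
    have hc2 : ((q - 1 - 1 : ℕ) : ℤ) = (q:ℤ) - 2 := by
      push_cast [Nat.cast_sub (by omega : 1 ≤ q - 1), Nat.cast_sub hq1]; ring
    rw [hc2]; ring
  -- Dhom on t • v₁
  have hDt : ∀ v : Fin m → F, Dhom (t • v₁) v = t * Dhom v₁ v := by
    intro v
    simp only [Dhom_apply, D]
    rw [Finset.mul_sum]
    exact Finset.sum_congr rfl (fun i _ => by simp [mul_comm, mul_left_comm])
  -- splitting off the v = 0 term
  have hsplit : ∀ (p₁ p₂ : Fin m → F), (0:Fin m → F) ≠ p₁ → (0:Fin m → F) ≠ p₂ → p₁ ≠ p₂ →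
      ∀ b : F,
      (∑ v : Fin m → F, tm w z x y ({0, p₁, p₂} : Set (Fin m → F)) (e (v, b))) =
      (∑ v : Fin m → F, g ((if b = 0 then 1 else 0) + (if Dhom p₁ v = -b then 1 else 0) +
          (if Dhom p₂ v = -b then 1 else 0)))
        - g ((if b = 0 then 1 else 0) + (if (0:F) = -b then 1 else 0) + (if (0:F) = -b then 1 else 0))
        + (if b = 0 then w ^ 3 * x ^ (q ^ m - 3) else z ^ 3 * y ^ (q ^ m - 3)) := by
    intro p₁ p₂ h01 h02 h12 b
    have h1 : (∑ v : Fin m → F, tm w z x y ({0, p₁, p₂} : Set (Fin m → F)) (e (v, b)))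
        = (∑ v ∈ Finset.univ.erase 0, tm w z x y ({0, p₁, p₂} : Set (Fin m → F)) (e (v, b)))
          + tm w z x y ({0, p₁, p₂} : Set (Fin m → F)) (e (0, b)) :=
      (Finset.sum_erase_add _ _ (Finset.mem_univ 0)).symm
    have h2 : (∑ v : Fin m → F, g ((if b = 0 then 1 else 0) + (if Dhom p₁ v = -b then 1 else 0) +
          (if Dhom p₂ v = -b then 1 else 0)))
        = (∑ v ∈ Finset.univ.erase 0, g ((if b = 0 then 1 else 0) + (if Dhom p₁ v = -b then 1 else 0) +
          (if Dhom p₂ v = -b then 1 else 0)))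
          + g ((if b = 0 then 1 else 0) + (if Dhom p₁ 0 = -b then 1 else 0) +
          (if Dhom p₂ 0 = -b then 1 else 0)) :=
      (Finset.sum_erase_add _ _ (Finset.mem_univ 0)).symm
    rw [h1, h2, hterm0 p₁ p₂ h01 h02 h12 b,
        Finset.sum_congr rfl (fun v hv => hterm p₁ p₂ h01 h02 h12 v b (Finset.ne_of_mem_erase hv))]
    simp only [map_zero]
    ring
  have hpair := Dhom_pair_surj h₁
  -- per-b difference
  have hperb : ∀ b : F,
      ((∑ v : Fin m → F, tm w z x y ({0, u₁, u₂} : Set (Fin m → F)) (e (v, b))) -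
       (∑ v : Fin m → F, tm w z x y ({0, v₁, t • v₁} : Set (Fin m → F)) (e (v, b)))) =
      if b = 0 then
        qm2 * (g 3 + 2*((q:ℤ)-1)*(g 2) + ((q:ℤ)-1)^2*(g 1)) - (q:ℤ) * qm2 * (g 3 + ((q:ℤ)-1)*(g 1))
      else
        qm2 * (g 2 + 2*((q:ℤ)-1)*(g 1) + ((q:ℤ)-1)^2*(g 0)) - (q:ℤ) * qm2 * (2*(g 1) + ((q:ℤ)-2)*(g 0)) := by
    intro b
    -- fiber cards
    have hsurj2 : Function.Surjective (fun v : Fin m → F => ((Dhom u₁) v, (Dhom u₂) v)) := by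
      intro p; obtain ⟨v, hvv⟩ := hpair p
      exact ⟨v, by simpa [AddMonoidHom.prod_apply] using hvv⟩
    have hcard1 : ∀ p : F × F,
        (Finset.univ.filter fun v : Fin m → F => ((Dhom u₁) v, (Dhom u₂) v) = p).card
          = q ^ (m-2) := by
      intro p
      have hfc := fiberCard ((Dhom u₁).prod (Dhom u₂)) hpair p
      simp only [AddMonoidHom.prod_apply] at hfc
      rw [hcardV, Fintype.card_prod, hqF] at hfc
      have hpow : q ^ (m-2) * (q * q) = q ^ m := by
        rw [show q * q = q ^ 2 from by ring, ← pow_add]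
        congr 1; omega
      exact Nat.eq_of_mul_eq_mul_right (Nat.mul_pos (by omega) (by omega)) (hfc.trans hpow.symm)
    have hcard2 : ∀ a : F,
        (Finset.univ.filter fun v : Fin m → F => (Dhom v₁) v = a).card = q ^ (m-1) := by
      intro a
      have hfc := fiberCard (Dhom v₁) (Dhom_surj hv₁) a
      rw [hcardV, hqF] at hfc
      have hpow : q ^ (m-1) * q = q ^ m := by
        rw [← pow_succ]; congr 1; omega
      exact Nat.eq_of_mul_eq_mul_right (by omega) (hfc.trans hpow.symm)
    have hcomp1 :
        (∑ v : Fin m → F, g ((if b = 0 then 1 else 0) + (if Dhom u₁ v = -b then 1 else 0) +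
            (if Dhom u₂ v = -b then 1 else 0)))
          = qm2 * ∑ p : F × F, g ((if b = 0 then 1 else 0) + (if p.1 = -b then 1 else 0) +
            (if p.2 = -b then 1 else 0)) := by
      have hsc := Finset.sum_comp (s := (Finset.univ : Finset (Fin m → F)))
        (fun p : F × F => g ((if b = 0 then 1 else 0) + (if p.1 = -b then 1 else 0) +
            (if p.2 = -b then 1 else 0)))
        (fun v : Fin m → F => ((Dhom u₁) v, (Dhom u₂) v))
      rw [hsc, Finset.image_univ_of_surjective hsurj2,
          Finset.sum_congr rfl (fun p _ => by rw [hcard1 p]), ← Finset.smul_sum,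
          nsmul_eq_mul, hqm2]
      push_cast
      ring
    have hcomp2 :
        (∑ v : Fin m → F, g ((if b = 0 then 1 else 0) + (if Dhom v₁ v = -b then 1 else 0) +
            (if t * Dhom v₁ v = -b then 1 else 0)))
          = (q:ℤ) * qm2 * ∑ a : F, g ((if b = 0 then 1 else 0) + (if a = -b then 1 else 0) +
            (if t * a = -b then 1 else 0)) := by
      have hsc := Finset.sum_comp (s := (Finset.univ : Finset (Fin m → F)))
        (fun a : F => g ((if b = 0 then 1 else 0) + (if a = -b then 1 else 0) +
            (if t * a = -b then 1 else 0)))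
        (fun v : Fin m → F => (Dhom v₁) v)
      rw [hsc, Finset.image_univ_of_surjective (Dhom_surj hv₁),
          Finset.sum_congr rfl (fun a _ => by rw [hcard2 a]), ← Finset.smul_sum,
          nsmul_eq_mul, hqm2]
      have hmm : ((q ^ (m-1) : ℕ) : ℤ) = (q:ℤ) * (q:ℤ) ^ (m - 2) := by
        push_cast
        rw [show m - 1 = (m-2) + 1 from by omega, pow_succ]
        ring
      rw [hmm]
    have inner : ∀ k : ℕ, (∑ a : F, g (k + if a = -b then 1 else 0)) = g (k+1) + ((q:ℤ)-1) * g k := by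
      intro k
      have hh : ∀ a : F, g (k + if a = -b then 1 else 0) = if a = -b then g (k+1) else g k := by
        intro a; split_ifs <;> norm_num
      rw [Finset.sum_congr rfl (fun a _ => hh a), sumF]
    have hS1 : ∀ j : ℕ,
        (∑ p : F × F, g ((j + if p.1 = -b then 1 else 0) + if p.2 = -b then 1 else 0))
          = g (j+2) + 2*((q:ℤ)-1)*(g (j+1)) + ((q:ℤ)-1)^2 * g j := by
      intro j
      rw [Fintype.sum_prod_type]
      have step : ∀ a₁ : F,
          (∑ a₂ : F, g ((j + if a₁ = -b then 1 else 0) + if a₂ = -b then 1 else 0))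
            = if a₁ = -b then g (j+2) + ((q:ℤ)-1)*(g (j+1)) else g (j+1) + ((q:ℤ)-1)*(g j) := by
        intro a₁
        by_cases h : a₁ = -b
        · rw [if_pos h]
          simp only [if_pos h]
          rw [inner (j+1)]
          skip
        · rw [if_neg h]
          simp only [if_neg h]
          rw [inner (j+0)]
          norm_num
      rw [Finset.sum_congr rfl (fun a₁ _ => step a₁), sumF]
      ring
    have hS2 : ∀ j : ℕ,
        (∑ a : F, g ((j + if a = -b then 1 else 0) + if t * a = -b then 1 else 0))
          = if b = 0 then g (j+2) + ((q:ℤ)-1) * g j else 2 * g (j+1) + ((q:ℤ)-2) * g j := by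
      intro j
      by_cases hb : b = 0
      · rw [if_pos hb]
        have hh : ∀ a : F, g ((j + if a = -b then 1 else 0) + if t * a = -b then 1 else 0)
            = if a = (0:F) then g (j+2) else g j := by
          intro a
          subst hb
          by_cases ha : a = 0
          · rw [if_pos ha]
            simp only [ha, neg_zero, mul_zero, if_pos rfl]
            norm_num
          · rw [if_neg ha]
            rw [if_neg (by simpa [neg_zero] using ha), if_neg (by simp [neg_zero, ht0, ha])]
            norm_num
        rw [Finset.sum_congr rfl (fun a _ => hh a), sumF]
      · rw [if_neg hb]
        have hbne : (-b : F) ≠ t⁻¹ * -b := by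
          intro hcontra
          apply ht1
          have h2 : t * -b = -b := by
            conv_lhs => rw [hcontra]
            rw [← mul_assoc, mul_inv_cancel₀ ht0, one_mul]
          have h3 : t * -b = 1 * -b := by rw [one_mul, h2]
          exact mul_right_cancel₀ (neg_ne_zero.mpr hb) h3
        have hh : ∀ a : F, g ((j + if a = -b then 1 else 0) + if t * a = -b then 1 else 0)
            = if a = -b then g (j+1) else if a = t⁻¹ * -b then g (j+1) else g j := by
          intro a
          by_cases h1 : a = -b
          · rw [if_pos h1, if_pos h1]
            have hta : ¬ (t * a = -b) := by
              rw [h1]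
              intro hc
              apply ht1
              exact mul_right_cancel₀ (neg_ne_zero.mpr hb) (by rw [hc, one_mul])
            rw [if_neg hta]
            skip
          · rw [if_neg h1, if_neg h1]
            by_cases h2 : a = t⁻¹ * -b
            · rw [if_pos h2]
              have hta : t * a = -b := by
                rw [h2, ← mul_assoc, mul_inv_cancel₀ ht0, one_mul]
              rw [if_pos hta]
              skip
            · rw [if_neg h2]
              have hta : ¬ (t * a = -b) := by
                intro hc
                apply h2
                rw [← hc, ← mul_assoc, inv_mul_cancel₀ ht0, one_mul]
              rw [if_neg hta]
              norm_num
        rw [Finset.sum_congr rfl (fun a _ => hh a), sumF2 (-b) (t⁻¹ * -b) hbne]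
        ring
    rw [hsplit u₁ u₂ (Ne.symm hu0) (Ne.symm hu0') hu12 b,
        hsplit v₁ (t • v₁) (Ne.symm hv₁) (Ne.symm hv₂) hv12 b]
    simp only [hDt]
    rw [hcomp1, hcomp2, hS1 (if b = 0 then 1 else 0), hS2 (if b = 0 then 1 else 0)]
    by_cases hb : b = 0
    · subst hb
      norm_num
      try ring
    · simp only [hb, if_false, ite_false]
      simp [hb]
      try ring
  -- main assembly
  rw [hJ, hJ, hCfin, Finset.sum_image (fun a _ b _ hab => einj hab),
      Finset.sum_image (fun a _ b _ hab => einj hab)]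
  show (∑ p : (Fin m → F) × F, tm w z x y ({0, u₁, u₂} : Set (Fin m → F)) (e p)) -
      (∑ p : (Fin m → F) × F, tm w z x y ({0, v₁, t • v₁} : Set (Fin m → F)) (e p)) = _
  rw [Fintype.sum_prod_type_right, Fintype.sum_prod_type_right, ← Finset.sum_sub_distrib,
      Finset.sum_congr rfl (fun b _ => hperb b), sumF 0]
  have e0 : g 0 = z ^ 3 * (x ^ (A - 3) * x ^ 3) * y ^ (Bn - 3) := by
    simp only [hg]
    rw [show x ^ (A - 0) = x ^ (A - 3) * x ^ 3 from by rw [← pow_add]; congr 1; omega]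
    norm_num
  have e1 : g 1 = w * z ^ 2 * (x ^ (A - 3) * x ^ 2) * (y ^ (Bn - 3) * y) := by
    simp only [hg]
    rw [show x ^ (A - 1) = x ^ (A - 3) * x ^ 2 from by rw [← pow_add]; congr 1; omega,
        show y ^ (Bn - (3 - 1)) = y ^ (Bn - 3) * y ^ 1 from by rw [← pow_add]; congr 1; omega]
    norm_num
    try ring
  have e2 : g 2 = w ^ 2 * z * (x ^ (A - 3) * x) * (y ^ (Bn - 3) * y ^ 2) := by
    simp only [hg]
    rw [show x ^ (A - 2) = x ^ (A - 3) * x ^ 1 from by rw [← pow_add]; congr 1; omega,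
        show y ^ (Bn - (3 - 2)) = y ^ (Bn - 3) * y ^ 2 from by rw [← pow_add]; congr 1; omega]
    norm_num
    try ring
  have e3 : g 3 = w ^ 3 * x ^ (A - 3) * (y ^ (Bn - 3) * y ^ 3) := by
    simp only [hg]
    rw [show y ^ (Bn - (3 - 3)) = y ^ (Bn - 3) * y ^ 3 from by rw [← pow_add]; congr 1; omega]
    norm_num
    try ring
  rw [e0, e1, e2, e3]
  have ecast : ((q ^ (m - 2) * (q - 1) : ℕ) : ℤ) = qm2 * ((q:ℤ) - 1) := by
    push_cast [Nat.cast_sub hq1]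
    rw [hqm2]
  rw [ecast]
  ring
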